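/- arXiv:2604.02083 — 3 statements merged into one kernel-verified Lean document; each statement's English description precedes it below -/
import Mathlib

section
/- Let k ≥ 2 and let P : Fin k → ℝ be a probability vector with P i > 0 for all i and ∑ i, P i = 1, and let A(P) be the warm-started fully-connected XY-mixer matrix. Then −1 is the smallest eigenvalue of A(P), and its eigenspace is one-dimensional: every x ∈ ℝ^k with A(P) · x = −x is a scalar multiple of v(P), where v(P)_i = √(P i). Equivalently, for every unit vector x ∈ ℝ^k one has xᵀ A(P) x ≥ −1, with equality if and only if x = ±v(P). -/
open Matrix Finset

/-!
Summed over pairs `{i, j}`, `(k - 1) • A(P)` is the sum of the reflections of the `(i, j)`-plane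
that negate `(√P i, √P j)` and fix `(√P j, -√P i)`. This yields the identity
`xᵀ A(P) x = (k - 1)⁻¹ * D(x) - ‖x‖²` with
`D(x) = ∑ i, ∑ j, (√P j * x i - √P i * x j) ^ 2 / (P i + P j)` (`xyMixerDefect P x`),
and `D(x) ≥ 0` vanishes exactly on the multiples of `v(P)`.
-/

noncomputable section

variable {ι : Type*} [Fintype ι]

lemma cast_card_sub_one_pos [Nontrivial ι] : (0 : ℝ) < Fintype.card ι - 1 :=
  sub_pos.mpr (by exact_mod_cast Fintype.one_lt_card)

lemma exists_eq_smul_iff_eq_or_eq_neg {u x : ι → ℝ} (hu : u ⬝ᵥ u = 1)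
    (hx : x ⬝ᵥ x = 1) : (∃ c : ℝ, x = c • u) ↔ x = u ∨ x = -u := by
  constructor
  · rintro ⟨c, rfl⟩
    rw [smul_dotProduct, dotProduct_smul, hu, smul_eq_mul, smul_eq_mul, mul_one] at hx
    rcases mul_self_eq_one_iff.mp hx with rfl | rfl
    · exact Or.inl (one_smul ℝ u)
    · exact Or.inr (neg_one_smul ℝ u)
  · rintro (rfl | rfl)
    · exact ⟨1, (one_smul ℝ x).symm⟩
    · exact ⟨-1, (neg_one_smul ℝ u).symm⟩

variable {P : ι → ℝ}

lemma sqrt_dotProduct_sqrt (hP : ∀ i, 0 ≤ P i) :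
    (fun i => √(P i)) ⬝ᵥ (fun i => √(P i)) = ∑ i, P i :=
  sum_congr rfl fun i _ => Real.mul_self_sqrt (hP i)

def xyMixerDefect (P x : ι → ℝ) : ℝ :=
  ∑ i, ∑ j, (√(P j) * x i - √(P i) * x j) ^ 2 / (P i + P j)

lemma xyMixerDefect_nonneg (hP : ∀ i, 0 ≤ P i) (x : ι → ℝ) : 0 ≤ xyMixerDefect P x :=
  sum_nonneg fun i _ => sum_nonneg fun j _ =>
    div_nonneg (sq_nonneg _) (add_nonneg (hP i) (hP j))

lemma xyMixerDefect_eq_zero_iff [Nonempty ι] (hP : ∀ i, 0 < P i) (x : ι → ℝ) :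
    xyMixerDefect P x = 0 ↔ ∃ c : ℝ, x = c • fun i => √(P i) := by
  have hterm_nonneg : ∀ i j, 0 ≤ (√(P j) * x i - √(P i) * x j) ^ 2 / (P i + P j) :=
    fun i j => div_nonneg (sq_nonneg _) (add_pos (hP i) (hP j)).le
  simp only [xyMixerDefect,
    sum_eq_zero_iff_of_nonneg fun i _ => sum_nonneg fun j _ => hterm_nonneg i j,
    sum_eq_zero_iff_of_nonneg fun j _ => hterm_nonneg _ j, mem_univ, true_implies,
    div_eq_zero_iff, (add_pos (hP _) (hP _)).ne', or_false, sq_eq_zero_iff, sub_eq_zero]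
  constructor
  · intro h
    obtain ⟨i₀⟩ := ‹Nonempty ι›
    refine ⟨x i₀ / √(P i₀), funext fun i => ?_⟩
    rw [Pi.smul_apply, smul_eq_mul, div_mul_eq_mul_div,
      eq_div_iff (Real.sqrt_pos.mpr (hP i₀)).ne']
    linarith [h i i₀]
  · rintro ⟨c, rfl⟩ i j
    simp only [Pi.smul_apply, smul_eq_mul]
    ring

variable [DecidableEq ι]

def xyMixer (P : ι → ℝ) : Matrix ι ι ℝ :=
  Matrix.of fun i j =>
    if i = j then ∑ l ∈ univ.erase i, (P l - P i) / (P i + P l)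
    else -2 * √(P i * P j) / (P i + P j)

lemma cast_card_univ_erase (i : ι) : ((univ.erase i).card : ℝ) = Fintype.card ι - 1 := by
  rw [card_erase_of_mem (mem_univ i), card_univ, Nat.cast_pred (Fintype.card_pos_iff.mpr ⟨i⟩)]

lemma xyMixer_mulVec_apply (P x : ι → ℝ) (i : ι) :
    (xyMixer P *ᵥ x) i =
      ∑ j ∈ univ.erase i, ((P j - P i) * x i - 2 * √(P i * P j) * x j) / (P i + P j) := by
  rw [mulVec, dotProduct, ← add_sum_erase _ _ (mem_univ i)]
  simp only [xyMixer, of_apply, if_pos, sum_mul, ← sum_add_distrib]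
  refine sum_congr rfl fun j hj => ?_
  rw [if_neg (ne_of_mem_erase hj).symm]
  ring

lemma xyMixer_mulVec_sqrt (hP : ∀ i, 0 < P i) :
    xyMixer P *ᵥ (fun i => √(P i)) = -((Fintype.card ι : ℝ) - 1) • fun i => √(P i) := by
  ext i
  have hterm : ∀ j,
      ((P j - P i) * √(P i) - 2 * √(P i * P j) * √(P j)) / (P i + P j) = -√(P i) := by
    intro j
    rw [div_eq_iff (add_pos (hP i) (hP j)).ne', Real.sqrt_mul (hP i).le]
    linear_combination (-2 * √(P i)) * Real.sq_sqrt (hP j).le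
  simp only [xyMixer_mulVec_apply, hterm, sum_const, nsmul_eq_mul, cast_card_univ_erase,
    Pi.smul_apply, smul_eq_mul]
  ring

lemma dotProduct_xyMixer_mulVec (hP : ∀ i, 0 < P i) (x : ι → ℝ) :
    x ⬝ᵥ (xyMixer P *ᵥ x) + ((Fintype.card ι : ℝ) - 1) * (x ⬝ᵥ x) = xyMixerDefect P x := by
  -- `h i i = 0` and `h i j + h j i` is twice the `(i, j)` term of the defect
  set h : ι → ι → ℝ := fun i j =>
    2 * √(P j) * (√(P j) * x i - √(P i) * x j) * x i / (P i + P j)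
  have hpair : ∀ i j, x i * (((P j - P i) * x i - 2 * √(P i * P j) * x j) / (P i + P j))
      + x i * x i = h i j := by
    intro i j
    simp only [h]
    have hne := (add_pos (hP i) (hP j)).ne'
    rw [Real.sqrt_mul (hP i).le]
    field_simp
    linear_combination (-2 * x i ^ 2) * Real.sq_sqrt (hP j).le
  have hrow : ∀ i, x i * (xyMixer P *ᵥ x) i + ((Fintype.card ι : ℝ) - 1) * (x i * x i)
      = ∑ j ∈ univ.erase i, h i j := by
    intro i
    rw [← sum_congr rfl fun j _ => hpair i j, sum_add_distrib, sum_const, nsmul_eq_mul,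
      cast_card_univ_erase, xyMixer_mulVec_apply, mul_sum]
  have hswap : ∀ i j,
      h i j + h j i = 2 * ((√(P j) * x i - √(P i) * x j) ^ 2 / (P i + P j)) := by
    intro i j
    simp only [h, add_comm (P j) (P i)]
    ring
  calc x ⬝ᵥ (xyMixer P *ᵥ x) + ((Fintype.card ι : ℝ) - 1) * (x ⬝ᵥ x)
      = ∑ i, ∑ j ∈ univ.erase i, h i j := by
        simp only [dotProduct, mul_sum, ← sum_add_distrib, hrow]
    _ = ∑ i, ∑ j, h i j := sum_congr rfl fun i _ => sum_erase _ (by simp [h])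
    _ = (∑ i, ∑ j, (h i j + h j i)) / 2 := by
        simp only [sum_add_distrib]
        rw [sum_comm (f := fun i j => h j i)]
        ring
    _ = xyMixerDefect P x := by
        simp only [hswap, ← mul_sum, xyMixerDefect]
        ring

def normalizedXYMixer (P : ι → ℝ) : Matrix ι ι ℝ :=
  ((Fintype.card ι : ℝ) - 1)⁻¹ • xyMixer P

variable [Nontrivial ι]

lemma normalizedXYMixer_mulVec_sqrt (hP : ∀ i, 0 < P i) :
    normalizedXYMixer P *ᵥ (fun i => √(P i)) = -fun i => √(P i) := by
  rw [normalizedXYMixer, smul_mulVec, xyMixer_mulVec_sqrt hP, smul_smul, mul_neg,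
    inv_mul_cancel₀ cast_card_sub_one_pos.ne', neg_smul, one_smul]

lemma dotProduct_normalizedXYMixer_mulVec (hP : ∀ i, 0 < P i) (x : ι → ℝ) :
    x ⬝ᵥ (normalizedXYMixer P *ᵥ x) =
      ((Fintype.card ι : ℝ) - 1)⁻¹ * xyMixerDefect P x - x ⬝ᵥ x := by
  have hk := (cast_card_sub_one_pos (ι := ι)).ne'
  rw [normalizedXYMixer, smul_mulVec, dotProduct_smul, smul_eq_mul,
    ← dotProduct_xyMixer_mulVec hP]
  field_simp
  ring

lemma neg_dotProduct_self_le_dotProduct_normalizedXYMixer_mulVec (hP : ∀ i, 0 < P i)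
    (x : ι → ℝ) : -(x ⬝ᵥ x) ≤ x ⬝ᵥ (normalizedXYMixer P *ᵥ x) := by
  have hdefect : 0 ≤ ((Fintype.card ι : ℝ) - 1)⁻¹ * xyMixerDefect P x :=
    mul_nonneg (inv_nonneg.mpr cast_card_sub_one_pos.le)
      (xyMixerDefect_nonneg (fun i => (hP i).le) x)
  rw [dotProduct_normalizedXYMixer_mulVec hP]
  linarith

lemma dotProduct_normalizedXYMixer_mulVec_eq_neg_iff (hP : ∀ i, 0 < P i) (x : ι → ℝ) :
    x ⬝ᵥ (normalizedXYMixer P *ᵥ x) = -(x ⬝ᵥ x) ↔ ∃ c : ℝ, x = c • fun i => √(P i) := by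
  rw [dotProduct_normalizedXYMixer_mulVec hP, sub_eq_neg_self, mul_eq_zero, inv_eq_zero,
    or_iff_right cast_card_sub_one_pos.ne', xyMixerDefect_eq_zero_iff hP]

lemma neg_one_le_of_normalizedXYMixer_mulVec_eq_smul (hP : ∀ i, 0 < P i) {μ : ℝ}
    {x : ι → ℝ} (hx : x ≠ 0) (hμ : normalizedXYMixer P *ᵥ x = μ • x) : -1 ≤ μ := by
  have hbound := neg_dotProduct_self_le_dotProduct_normalizedXYMixer_mulVec hP x
  rw [hμ, dotProduct_smul, smul_eq_mul, ← neg_one_mul] at hbound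
  exact le_of_mul_le_mul_right hbound (dotProduct_self_star_pos_iff.mpr hx)

lemma exists_eq_smul_sqrt_of_normalizedXYMixer_mulVec_eq_neg (hP : ∀ i, 0 < P i)
    {x : ι → ℝ} (hx : normalizedXYMixer P *ᵥ x = -x) : ∃ c : ℝ, x = c • fun i => √(P i) := by
  rw [← dotProduct_normalizedXYMixer_mulVec_eq_neg_iff hP, hx, dotProduct_neg]

end

/-- For the warm-started fully-connected XY-mixer `A(P)`,
`-1` is the smallest eigenvalue, with a one-dimensional eigenspace spanned by
`v(P)` (where `v(P) i = √(P i)`): every `x` with `A(P)·x = -x` is a scalar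
multiple of `v(P)`; equivalently, for every unit vector `x` one has
`xᵀ A(P) x ≥ -1`, with equality iff `x = ±v(P)`. -/
theorem statement2 (k : ℕ) (hk : 2 ≤ k) (P : Fin k → ℝ)
    (hpos : ∀ i, 0 < P i) (hsum : ∑ i, P i = 1)
    (A : Matrix (Fin k) (Fin k) ℝ)
    (hA : ∀ i j, A i j =
      if i = j then
        (1 / ((k : ℝ) - 1)) * ∑ l ∈ Finset.univ.erase i, (P l - P i) / (P i + P l)
      else
        -2 * Real.sqrt (P i * P j) / (((k : ℝ) - 1) * (P i + P j)))
    (v : Fin k → ℝ) (hv : ∀ i, v i = Real.sqrt (P i)) :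
    A.mulVec v = -v ∧
    (∀ μ : ℝ, ∀ x : Fin k → ℝ, x ≠ 0 → A.mulVec x = μ • x → -1 ≤ μ) ∧
    (∀ x : Fin k → ℝ, A.mulVec x = -x → ∃ c : ℝ, x = c • v) ∧
    (∀ x : Fin k → ℝ, ∑ i, (x i) ^ 2 = 1 →
      -1 ≤ x ⬝ᵥ A.mulVec x ∧ (x ⬝ᵥ A.mulVec x = -1 ↔ x = v ∨ x = -v)) := by
  have : Nontrivial (Fin k) := Fin.nontrivial_iff_two_le.mpr hk
  obtain rfl : A = normalizedXYMixer P := by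
    ext i j
    rw [hA, normalizedXYMixer, Matrix.smul_apply, xyMixer, of_apply, Fintype.card_fin,
      smul_eq_mul]
    split_ifs <;> field_simp
  obtain rfl : v = fun i => √(P i) := funext hv
  have hv_unit : (fun i => √(P i)) ⬝ᵥ (fun i => √(P i)) = 1 := by
    rw [sqrt_dotProduct_sqrt fun i => (hpos i).le, hsum]
  refine ⟨normalizedXYMixer_mulVec_sqrt hpos,
    fun μ x hx => neg_one_le_of_normalizedXYMixer_mulVec_eq_smul hpos hx,
    fun x => exists_eq_smul_sqrt_of_normalizedXYMixer_mulVec_eq_neg hpos, fun x hx => ?_⟩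
  replace hx : x ⬝ᵥ x = 1 := by simpa only [dotProduct, sq] using hx
  refine ⟨hx ▸ neg_dotProduct_self_le_dotProduct_normalizedXYMixer_mulVec hpos x, ?_⟩
  rw [← exists_eq_smul_iff_eq_or_eq_neg hv_unit hx,
    ← dotProduct_normalizedXYMixer_mulVec_eq_neg_iff hpos, hx]
end

section
/- Let G be a simple graph on Fin k (k ≥ 2) with at least one edge (not necessarily connected), with maximum degree Δ ≥ 1, and let P : Fin k → ℝ be a probability vector with P i > 0 for all i and ∑ i, P i = 1. Define B_G(P) as the k×k real symmetric matrix with B_G(P)_ii = (1/Δ) · ( ∑_{j ∈ N_G(i)} (P j − P i)/(P i + P j) + (deg_G(i) − Δ) ), B_G(P)_ij = −2√(P i · P j)/(Δ (P i + P j)) on edges of G, and 0 otherwise. Then B_G(P) · v(P) = −v(P) where v(P)_i = √(P i), and every eigenvalue λ of B_G(P) satisfies λ ≥ −1 (equivalently, B_G(P) + I is positive semidefinite); that is, v(P) is a ground state of B_G(P) with energy −1, though not necessarily unique. -/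
/-!
Shifted by the identity, the mixer is `Δ⁻¹` times the matrix of the quadratic form
`x ↦ ½ ∑_{i ∼ j} 2 / (P i + P j) · (√(P j) x i - √(P i) x j)²`. A sum of squares is
nonnegative, and every square vanishes at `x = √P`; so `B + 1` is positive semidefinite with
`√P` in its kernel.
-/

open Matrix Finset

namespace SimpleGraph

variable {V : Type*} [Fintype V] (G : SimpleGraph V) [DecidableRel G.Adj]

theorem sum_neighborFinset_comm {M : Type*} [AddCommMonoid M] (f : V → V → M) :
    ∑ i, ∑ j ∈ G.neighborFinset i, f i j = ∑ i, ∑ j ∈ G.neighborFinset i, f j i :=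
  sum_comm' fun i j => by simp [adj_comm]

variable [DecidableEq V] (c : V → V → ℝ) (s : V → ℝ)

def twistedLapMatrix : Matrix V V ℝ :=
  diagonal (fun i => ∑ j ∈ G.neighborFinset i, c i j * s j ^ 2) -
    of fun i j => if G.Adj i j then c i j * s i * s j else 0

theorem twistedLapMatrix_mulVec_apply (x : V → ℝ) (i : V) :
    (G.twistedLapMatrix c s *ᵥ x) i =
      ∑ j ∈ G.neighborFinset i, c i j * s j * (s j * x i - s i * x j) := by
  rw [twistedLapMatrix, sub_mulVec, Pi.sub_apply, mulVec_diagonal, mulVec, dotProduct]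
  simp only [of_apply, ite_mul, zero_mul, ← sum_filter, ← neighborFinset_eq_filter, sum_mul,
    ← sum_sub_distrib]
  exact sum_congr rfl fun j _ => by ring

theorem twistedLapMatrix_mulVec_self : G.twistedLapMatrix c s *ᵥ s = 0 := by
  ext i
  rw [twistedLapMatrix_mulVec_apply, Pi.zero_apply]
  exact sum_eq_zero fun j _ => by ring

variable {c}

theorem dotProduct_twistedLapMatrix_mulVec (hc : ∀ i j, c i j = c j i) (x : V → ℝ) :
    x ⬝ᵥ (G.twistedLapMatrix c s *ᵥ x) =
      (∑ i, ∑ j ∈ G.neighborFinset i, c i j * (s j * x i - s i * x j) ^ 2) / 2 := by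
  have h := G.sum_neighborFinset_comm fun i j => x i * (c i j * s j * (s j * x i - s i * x j))
  simp only [dotProduct, twistedLapMatrix_mulVec_apply, mul_sum]
  rw [eq_div_iff two_ne_zero, mul_two]
  nth_rw 2 [h]
  rw [← sum_add_distrib]
  refine sum_congr rfl fun i _ => ?_
  rw [← sum_add_distrib]
  refine sum_congr rfl fun j _ => ?_
  rw [hc j i]
  ring

theorem twistedLapMatrix_isHermitian (hc : ∀ i j, c i j = c j i) :
    (G.twistedLapMatrix c s).IsHermitian := by
  refine (isHermitian_diagonal _).sub ?_
  ext i j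
  simp only [conjTranspose_apply, of_apply, star_trivial, adj_comm, hc j i]
  split_ifs <;> ring

theorem posSemidef_twistedLapMatrix (hc : ∀ i j, c i j = c j i) (hc₀ : ∀ i j, 0 ≤ c i j) :
    (G.twistedLapMatrix c s).PosSemidef := by
  refine .of_dotProduct_mulVec_nonneg (G.twistedLapMatrix_isHermitian s hc) fun x => ?_
  rw [star_trivial, dotProduct_twistedLapMatrix_mulVec G s hc]
  exact div_nonneg (sum_nonneg fun i _ => sum_nonneg fun j _ =>
    mul_nonneg (hc₀ i j) (sq_nonneg _)) zero_le_two

end SimpleGraph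

theorem Matrix.PosSemidef.nonneg_of_mulVec_eq_smul {n : Type*} [Fintype n] {A : Matrix n n ℝ}
    (hA : A.PosSemidef) {μ : ℝ} {x : n → ℝ} (hx : x ≠ 0) (hμ : A *ᵥ x = μ • x) : 0 ≤ μ := by
  have hquad := hA.dotProduct_mulVec_nonneg x
  rw [star_trivial, hμ, dotProduct_smul, smul_eq_mul] at hquad
  have hxx : 0 < x ⬝ᵥ x := by simpa using dotProduct_self_star_pos_iff.mpr hx
  exact nonneg_of_mul_nonneg_left hquad hxx

theorem add_one_eq_inv_maxDegree_smul_twistedLapMatrix {V : Type*} [Fintype V] [DecidableEq V]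
    (G : SimpleGraph V) [DecidableRel G.Adj] (hΔ : G.maxDegree ≠ 0) {P : V → ℝ}
    (hpos : ∀ i, 0 < P i) {B : Matrix V V ℝ}
    (hB : ∀ i j, B i j =
      if i = j then
        (1 / (G.maxDegree : ℝ)) *
          ((∑ l ∈ G.neighborFinset i, (P l - P i) / (P i + P l))
            + ((G.degree i : ℝ) - (G.maxDegree : ℝ)))
      else if G.Adj i j then
        -2 * Real.sqrt (P i * P j) / ((G.maxDegree : ℝ) * (P i + P j))
      else 0) :
    B + 1 = (G.maxDegree : ℝ)⁻¹ •
      G.twistedLapMatrix (fun i j => 2 / (P i + P j)) (fun i => Real.sqrt (P i)) := by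
  have hdiag : ∀ i, ∑ l ∈ G.neighborFinset i, (P l - P i) / (P i + P l) + G.degree i =
      ∑ l ∈ G.neighborFinset i, 2 / (P i + P l) * Real.sqrt (P l) ^ 2 := fun i => by
    rw [← G.card_neighborFinset_eq_degree, card_eq_sum_ones, Nat.cast_sum, ← sum_add_distrib]
    refine sum_congr rfl fun l _ => ?_
    have := add_pos (hpos i) (hpos l)
    rw [Nat.cast_one, Real.sq_sqrt (hpos l).le]
    field_simp
    ring
  ext i j
  rw [Matrix.add_apply, hB, Matrix.smul_apply, SimpleGraph.twistedLapMatrix, Matrix.sub_apply,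
    of_apply, smul_eq_mul]
  rcases eq_or_ne i j with rfl | hij
  · rw [if_pos rfl, diagonal_apply_eq, one_apply_eq, if_neg (G.irrefl (v := i)), sub_zero,
      ← hdiag]
    field_simp
    ring
  · rw [if_neg hij, diagonal_apply_ne _ hij, one_apply_ne hij, zero_sub, add_zero]
    split_ifs
    · rw [Real.sqrt_mul (hpos i).le]
      field_simp
    · simp

theorem statement8_general (k : ℕ)
    (G : SimpleGraph (Fin k)) [DecidableRel G.Adj]
    (hΔ : 1 ≤ G.maxDegree)
    (P : Fin k → ℝ) (hpos : ∀ i, 0 < P i)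
    (B : Matrix (Fin k) (Fin k) ℝ)
    (hB : ∀ i j, B i j =
      if i = j then
        (1 / (G.maxDegree : ℝ)) *
          ((∑ l ∈ G.neighborFinset i, (P l - P i) / (P i + P l))
            + ((G.degree i : ℝ) - (G.maxDegree : ℝ)))
      else if G.Adj i j then
        -2 * Real.sqrt (P i * P j) / ((G.maxDegree : ℝ) * (P i + P j))
      else 0)
    (v : Fin k → ℝ) (hv : ∀ i, v i = Real.sqrt (P i)) :
    B.mulVec v = -v ∧
    (∀ μ : ℝ, ∀ x : Fin k → ℝ, x ≠ 0 → B.mulVec x = μ • x → -1 ≤ μ) ∧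
    (B + 1).PosSemidef := by
  obtain rfl : v = fun i => Real.sqrt (P i) := funext hv
  have hΔ₀ : (0 : ℝ) < G.maxDegree := by exact_mod_cast hΔ
  have hBL := add_one_eq_inv_maxDegree_smul_twistedLapMatrix G (by omega) hpos hB
  have hpsd : (B + 1).PosSemidef := hBL ▸
    (G.posSemidef_twistedLapMatrix _ (fun i j => by rw [add_comm])
      (fun i j => div_nonneg zero_le_two (add_pos (hpos i) (hpos j)).le)).smul
      (inv_nonneg.mpr hΔ₀.le)
  refine ⟨?_, fun μ x hx hμ => ?_, hpsd⟩
  · have h := congrArg (· *ᵥ fun i => Real.sqrt (P i)) hBL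
    simp only [add_mulVec, one_mulVec, smul_mulVec, G.twistedLapMatrix_mulVec_self, smul_zero] at h
    exact eq_neg_of_add_eq_zero_left h
  · have h : (B + 1) *ᵥ x = (μ + 1) • x := by rw [add_mulVec, one_mulVec, hμ, add_smul, one_smul]
    linarith [hpsd.nonneg_of_mulVec_eq_smul hx h]

/-- Let `G` be a simple graph on `Fin k` (`k ≥ 2`) with at
least one edge (not necessarily connected), with maximum degree `Δ ≥ 1`, and
`P` a positive probability vector.  The degree-corrected warm-started XY-mixer
`B_G(P)` satisfies `B_G(P)·v(P) = -v(P)` (with `v(P) i = √(P i)`), every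
eigenvalue `λ` of `B_G(P)` satisfies `λ ≥ -1`, and equivalently `B_G(P) + I`
is positive semidefinite: `v(P)` is a ground state with energy `-1`, though
not necessarily unique. -/
theorem statement8 (k : ℕ) (hk : 2 ≤ k)
    (G : SimpleGraph (Fin k)) [DecidableRel G.Adj]
    (hedge : ∃ a b : Fin k, G.Adj a b) (hΔ : 1 ≤ G.maxDegree)
    (P : Fin k → ℝ) (hpos : ∀ i, 0 < P i) (hsum : ∑ i, P i = 1)
    (B : Matrix (Fin k) (Fin k) ℝ)
    (hB : ∀ i j, B i j =
      if i = j then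
        (1 / (G.maxDegree : ℝ)) *
          ((∑ l ∈ G.neighborFinset i, (P l - P i) / (P i + P l))
            + ((G.degree i : ℝ) - (G.maxDegree : ℝ)))
      else if G.Adj i j then
        -2 * Real.sqrt (P i * P j) / ((G.maxDegree : ℝ) * (P i + P j))
      else 0)
    (v : Fin k → ℝ) (hv : ∀ i, v i = Real.sqrt (P i)) :
    B.mulVec v = -v ∧
    (∀ μ : ℝ, ∀ x : Fin k → ℝ, x ≠ 0 → B.mulVec x = μ • x → -1 ≤ μ) ∧
    (B + 1).PosSemidef :=
  statement8_general k G hΔ P hpos B hB v hv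
end

section
/- Let G be a simple graph on Fin k (k ≥ 2) with at least one edge and maximum degree Δ ≥ 1, let P : Fin k → ℝ be a probability vector with P i > 0 and ∑ i, P i = 1, and let G₁, …, G_c be an edge coloring of G: each G_l is a nonempty subgraph of G of maximum degree 1 (a matching), and their edge sets partition the edges of G. For each l let B_{G_l}(P) be the degree-corrected warm-started XY-mixer matrix of the matching G_l (with its own maximum degree Δ(G_l) = 1): B_ii = (P_j − P_i)/(P_i + P_j) if i is matched to j in G_l, B_ii = −1 if i is unmatched in G_l, B_ij = −2√(P_i P_j)/(P_i + P_j) on matched pairs, and 0 otherwise. Then for every β ∈ ℝ and every integer T ≥ 1, the Trotterized evolution fixes v(P) up to the phase e^{iβ}: ∏_{t=1}^{T} ( e^{−iβ(c−Δ)/(TΔ)} · ∏_{l=1}^{c} exp(−i (β/(TΔ)) · B_{G_l}(P)) ) · v(P) = e^{iβ} · v(P), where v(P)_i = √(P_i). -/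
open Matrix Finset

/-!
The vector `v(P) = (√(P i))ᵢ` is an eigenvector with eigenvalue `-1` of the (Δ = 1) mixer of any
graph, since each edge `ij` contributes `((P j - P i) √(P i) - 2 √(P i P j) √(P j)) / (P i + P j)
= -√(P i)` to row `i`, and the diagonal offset `deg i - 1` leaves exactly `-√(P i)`. Hence, with
`r = β / (T Δ)`, every factor `exp(-i r B_l)` acts on `v(P)` by `e^{i r}`, one Trotter layer by
`e^{-i r (c - Δ)} e^{i r c} = e^{i r Δ} = e^{i β / T}`, and `T` layers by `e^{i β}`.
-/

namespace Matrix

variable {n R : Type*} [Fintype n] [DecidableEq n]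

theorem list_prod_mulVec_of_forall_mulVec_eq_smul [CommSemiring R] {v : n → R} {a : R}
    (L : List (Matrix n n R)) (h : ∀ M ∈ L, M *ᵥ v = a • v) :
    L.prod *ᵥ v = a ^ L.length • v := by
  induction L with
  | nil => simp
  | cons M L ih =>
    rw [List.prod_cons, ← mulVec_mulVec, ih fun N hN => h N (List.mem_cons_of_mem M hN),
      mulVec_smul, h M List.mem_cons_self, smul_smul, List.length_cons, pow_succ]

theorem pow_mulVec_of_mulVec_eq_smul [CommSemiring R] {M : Matrix n n R} {v : n → R} {a : R}
    (h : M *ᵥ v = a • v) (k : ℕ) : (M ^ k) *ᵥ v = a ^ k • v := by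
  rw [← List.prod_replicate, list_prod_mulVec_of_forall_mulVec_eq_smul _ fun N hN => ?_,
    List.length_replicate]
  rwa [List.eq_of_mem_replicate hN]

attribute [local instance] Matrix.linftyOpNormedAddCommGroup Matrix.linftyOpNormedRing
  Matrix.linftyOpNormedAlgebra in
theorem exp_mulVec_of_mulVec_eq_smul [RCLike R] {M : Matrix n n R} {v : n → R} {μ : R}
    (h : M *ᵥ v = μ • v) : NormedSpace.exp M *ᵥ v = NormedSpace.exp μ • v := by
  have hM := (NormedSpace.exp_series_hasSum_exp' (𝕂 := R) M).map
    (AddMonoidHom.mk' (· *ᵥ v) fun A B => add_mulVec A B v)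
    (continuous_id.matrix_mulVec continuous_const)
  have hμ := (NormedSpace.exp_series_hasSum_exp' (𝕂 := R) μ).smul_const v
  refine hM.unique (hμ.congr_fun fun k => ?_)
  simp [smul_mulVec, pow_mulVec_of_mulVec_eq_smul h, smul_smul]

end Matrix

/-- The paper's `B_H(P)` with `Δ(H)` replaced by `1`; for a matching `H` it is exactly `B_H(P)`. -/
noncomputable def warmStartXYMixer {V : Type*} [Fintype V] [DecidableEq V] (H : SimpleGraph V)
    [DecidableRel H.Adj] (P : V → ℝ) : Matrix V V ℝ :=
  Matrix.of fun i j =>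
    if i = j then (∑ j' ∈ H.neighborFinset i, (P j' - P i) / (P i + P j')) + ((H.degree i : ℝ) - 1)
    else if H.Adj i j then -2 * √(P i * P j) / (P i + P j) else 0

theorem warmStartXYMixer_mulVec_sqrt {V : Type*} [Fintype V] [DecidableEq V]
    (H : SimpleGraph V) [DecidableRel H.Adj] {P : V → ℝ} (hP : ∀ i, 0 < P i) :
    warmStartXYMixer H P *ᵥ (fun i => √(P i)) = -fun i => √(P i) := by
  ext i
  have hedge_term : ∀ j,
      (P j - P i) / (P i + P j) * √(P i) + -2 * √(P i * P j) / (P i + P j) * √(P j) = -√(P i) := by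
    intro j
    rw [Real.sqrt_mul (hP i).le]
    have hj := Real.mul_self_sqrt (hP j).le
    have := (add_pos (hP i) (hP j)).ne'
    field_simp
    linear_combination -2 * √(P i) * hj
  have hrow : ∀ j, warmStartXYMixer H P i j * √(P j) =
      (if i = j then
        ((∑ j' ∈ H.neighborFinset i, (P j' - P i) / (P i + P j')) + ((H.degree i : ℝ) - 1)) * √(P i)
        else 0) +
      (if j ∈ H.neighborFinset i then -2 * √(P i * P j) / (P i + P j) * √(P j) else 0) := by
    intro j
    by_cases hij : i = j
    · subst hij; simp [warmStartXYMixer]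
    · by_cases hadj : H.Adj i j <;> simp [warmStartXYMixer, hij, hadj]
  simp only [mulVec, dotProduct, hrow, sum_add_distrib, sum_ite_eq, mem_univ, if_true,
    sum_ite_mem, univ_inter, Pi.neg_apply]
  rw [add_mul, sum_mul, add_right_comm, ← sum_add_distrib,
    sum_congr rfl fun j _ => hedge_term j, sum_const,
    SimpleGraph.card_neighborFinset_eq_degree]
  simp only [nsmul_eq_mul]
  ring

theorem statement19_general (k : ℕ)
    (G : SimpleGraph (Fin k)) [DecidableRel G.Adj]
    (hΔ : 1 ≤ G.maxDegree)
    (P : Fin k → ℝ) (hpos : ∀ i, 0 < P i)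
    (c : ℕ) (Gl : Fin c → SimpleGraph (Fin k)) [∀ l, DecidableRel (Gl l).Adj]
    (B : Fin c → Matrix (Fin k) (Fin k) ℂ)
    (hB : ∀ l i j, B l i j =
      if i = j then
        ((((∑ j' ∈ (Gl l).neighborFinset i, (P j' - P i) / (P i + P j'))
          + (((Gl l).degree i : ℝ) - 1)) : ℝ) : ℂ)
      else if (Gl l).Adj i j then
        ((-2 * Real.sqrt (P i * P j) / (P i + P j) : ℝ) : ℂ)
      else 0)
    (v : Fin k → ℂ) (hv : ∀ i, v i = ((Real.sqrt (P i) : ℝ) : ℂ)) :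
    ∀ (β : ℝ) (T : ℕ), 1 ≤ T →
      ((Complex.exp (-(Complex.I * β) * ((c : ℂ) - (G.maxDegree : ℂ))
            / ((T : ℂ) * (G.maxDegree : ℂ))) •
        (List.ofFn (fun l : Fin c =>
          NormedSpace.exp
            ((-(Complex.I * ((β / ((T : ℝ) * (G.maxDegree : ℝ))) : ℝ))) • B l))).prod) ^ T).mulVec v
      = Complex.exp (Complex.I * β) • v := by
  intro β T hT
  have hΔ0 : (G.maxDegree : ℂ) ≠ 0 := by exact_mod_cast Nat.one_le_iff_ne_zero.mp hΔ
  have hT0 : (T : ℂ) ≠ 0 := by exact_mod_cast Nat.one_le_iff_ne_zero.mp hT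
  have hB_eig : ∀ l, B l *ᵥ v = -v := by
    intro l
    have hBl : B l = (warmStartXYMixer (Gl l) P).map Complex.ofRealHom := by
      ext i j
      rw [hB, map_apply, warmStartXYMixer, of_apply]
      split_ifs <;> simp
    have hv' : v = Complex.ofRealHom ∘ fun i => √(P i) := funext hv
    ext i
    rw [hBl, hv', ← RingHom.map_mulVec, warmStartXYMixer_mulVec_sqrt _ hpos]
    simp
  set r : ℝ := β / ((T : ℝ) * (G.maxDegree : ℝ))
  have hfactor : ∀ l, NormedSpace.exp ((-(Complex.I * r)) • B l) *ᵥ v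
      = Complex.exp (Complex.I * r) • v := by
    intro l
    rw [Complex.exp_eq_exp_ℂ]
    exact exp_mulVec_of_mulVec_eq_smul (by rw [smul_mulVec, hB_eig, smul_neg, neg_smul, neg_neg])
  have hlayer : (Complex.exp (-(Complex.I * β) * ((c : ℂ) - (G.maxDegree : ℂ))
      / ((T : ℂ) * (G.maxDegree : ℂ))) •
      (List.ofFn fun l => NormedSpace.exp ((-(Complex.I * r)) • B l)).prod) *ᵥ v
      = Complex.exp (Complex.I * β / T) • v := by
    rw [smul_mulVec, list_prod_mulVec_of_forall_mulVec_eq_smul _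
      (List.forall_mem_ofFn_iff.mpr hfactor), List.length_ofFn, smul_smul,
      ← Complex.exp_nat_mul, ← Complex.exp_add]
    congr 2
    simp only [r]
    push_cast
    field_simp
    ring
  rw [pow_mulVec_of_mulVec_eq_smul hlayer, ← Complex.exp_nat_mul]
  congr 2
  field_simp

/-- Let `G` be a simple graph on `Fin k` (`k ≥ 2`) with at
least one edge and maximum degree `Δ ≥ 1`, `P` a positive probability vector,
and `G₁, …, G_c` an edge coloring of `G`: each `G_l` is a nonempty subgraph of
`G` of maximum degree 1 (a matching), and their edge sets partition the edges
of `G`.  For each `l`, let `B l` be the degree-corrected warm-started XY-mixer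
matrix of the matching `G_l` (whose own maximum degree is `1`):
`(B l) i i = (P j - P i)/(P i + P j)` if `i` is matched to `j` in `G_l` and
`-1` if `i` is unmatched (uniformly,
`(B l) i i = ∑_{j ∈ N(i)} (P j - P i)/(P i + P j) + (deg(i) - 1)`),
`(B l) i j = -2√(P i P j)/(P i + P j)` on matched pairs, and `0` otherwise.
Then for every `β ∈ ℝ` and every integer `T ≥ 1`, the Trotterized evolution
`∏_{t=1}^{T} (e^{-iβ(c-Δ)/(TΔ)} ∏_{l=1}^{c} exp(-i(β/(TΔ)) B l))`
fixes `v(P)` (with `v(P) i = √(P i)`) up to the phase `e^{iβ}`. -/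
theorem statement19 (k : ℕ) (hk : 2 ≤ k)
    (G : SimpleGraph (Fin k)) [DecidableRel G.Adj]
    (hedge : ∃ a b : Fin k, G.Adj a b) (hΔ : 1 ≤ G.maxDegree)
    (P : Fin k → ℝ) (hpos : ∀ i, 0 < P i) (hsum : ∑ i, P i = 1)
    (c : ℕ) (Gl : Fin c → SimpleGraph (Fin k)) [∀ l, DecidableRel (Gl l).Adj]
    (hsub : ∀ l, Gl l ≤ G)
    (hne : ∀ l, ∃ a b : Fin k, (Gl l).Adj a b)
    (hmatch : ∀ l i, (Gl l).degree i ≤ 1)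
    (hpart : ∀ i j : Fin k, G.Adj i j → ∃! l, (Gl l).Adj i j)
    (B : Fin c → Matrix (Fin k) (Fin k) ℂ)
    (hB : ∀ l i j, B l i j =
      if i = j then
        ((((∑ j' ∈ (Gl l).neighborFinset i, (P j' - P i) / (P i + P j'))
          + (((Gl l).degree i : ℝ) - 1)) : ℝ) : ℂ)
      else if (Gl l).Adj i j then
        ((-2 * Real.sqrt (P i * P j) / (P i + P j) : ℝ) : ℂ)
      else 0)
    (v : Fin k → ℂ) (hv : ∀ i, v i = ((Real.sqrt (P i) : ℝ) : ℂ)) :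
    ∀ (β : ℝ) (T : ℕ), 1 ≤ T →
      ((Complex.exp (-(Complex.I * β) * ((c : ℂ) - (G.maxDegree : ℂ))
            / ((T : ℂ) * (G.maxDegree : ℂ))) •
        (List.ofFn (fun l : Fin c =>
          NormedSpace.exp
            ((-(Complex.I * ((β / ((T : ℝ) * (G.maxDegree : ℝ))) : ℝ))) • B l))).prod) ^ T).mulVec v
      = Complex.exp (Complex.I * β) • v :=
  statement19_general k G hΔ P hpos c Gl B hB v hv
end
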